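/- arXiv:2307.02711 — 2 statements merged into one kernel-verified Lean document; each statement's English description precedes it below -/
import Mathlib

section
/- Let π have rix-factorization π = α_1 ⋯ α_k β with β_1(π) the first letter of β. The following are equivalent: (a) β is increasing; (b) every letter of β is a rixed point of π; (c) every letter of β is either a rixed point of π or equals β_1(π); (d) β_1(π) is a rixed point of π. Moreover, any letter of β that is neither β_1(π) nor a rixed point of π is smaller than β_1(π). -/
namespace DMTCS

def IsDescentOf (l : List ℕ) (d : ℕ) : Prop :=
  ∃ i, i + 1 < l.length ∧ l.getD i 0 = d ∧ l.getD (i + 1) 0 < d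

/-- The rix-factorization algorithm of Lin and Zeng: returns the list of α-factors
and the final factor β. -/
def rixFact (l : List ℕ) : List (List ℕ) × List ℕ :=
  if h : l.length < 2 then ([], l)
  else
    let dvals := ((List.range (l.length - 1)).filter
      (fun i => decide (l.getD (i + 1) 0 < l.getD i 0))).map (fun i => l.getD i 0)
    if dvals = [] then ([], l)
    else
      let x := dvals.foldr max 0
      let p := l.idxOf x
      if p = 0 then ([], l)
      else
        have : (l.drop (p + 1)).length < l.length := by
          simp only [List.length_drop]; omega
        let r := rixFact (l.drop (p + 1))
        (l.take (p + 1) :: r.1, r.2)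
termination_by l.length

/-- `β₁(π)`, the first letter of the rix-factor `β`. -/
def beta1 (l : List ℕ) : ℕ := (rixFact l).2.headD 0

/-- `y` is a rixed point of `l`: it lies in the maximal increasing suffix of `l`
(equivalently, in some strictly increasing suffix) and is not smaller than `β₁(l)`. -/
def RixPt (l : List ℕ) (y : ℕ) : Prop :=
  (∃ t, t <:+ l ∧ List.Pairwise (· < ·) t ∧ y ∈ t) ∧ beta1 l ≤ y

/-- The list of descent tops of `l`. -/
def DV (l : List ℕ) : List ℕ :=
  ((List.range (l.length - 1)).filter
      (fun i => decide (l.getD (i + 1) 0 < l.getD i 0))).map (fun i => l.getD i 0)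

/-- The largest descent top of `l`. -/
def XV (l : List ℕ) : ℕ := (DV l).foldr max 0

/-- Auxiliary property: `b` starts with its largest descent top, followed by a descent. -/
def Bad (b : List ℕ) : Prop :=
  1 < b.length ∧ b.getD 1 0 < b.getD 0 0 ∧
  ∀ i, i + 1 < b.length → b.getD (i + 1) 0 < b.getD i 0 → b.getD i 0 ≤ b.getD 0 0

lemma rixFact_snd_base1 {l : List ℕ} (h : l.length < 2) : (rixFact l).2 = l := by
  rw [rixFact, dif_pos h]

lemma rixFact_snd_base2 {l : List ℕ} (h2 : ¬ l.length < 2) (hd : DV l = []) :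
    (rixFact l).2 = l := by
  rw [DV] at hd
  rw [rixFact, dif_neg h2]
  simp only [if_pos hd]

lemma rixFact_snd_base3 {l : List ℕ} (h2 : ¬ l.length < 2) (hd : ¬ DV l = [])
    (hp : l.idxOf (XV l) = 0) : (rixFact l).2 = l := by
  rw [DV] at hd
  rw [XV, DV] at hp
  rw [rixFact, dif_neg h2]
  simp only [if_neg hd, if_pos hp]

lemma rixFact_snd_rec {l : List ℕ} (h2 : ¬ l.length < 2) (hd : ¬ DV l = [])
    (hp : ¬ l.idxOf (XV l) = 0) :
    (rixFact l).2 = (rixFact (l.drop (l.idxOf (XV l) + 1))).2 := by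
  rw [DV] at hd
  rw [XV, DV] at hp ⊢
  rw [rixFact, dif_neg h2]
  simp only [if_neg hd, if_neg hp]

lemma mem_le_foldr_max : ∀ {L : List ℕ} {a : ℕ}, a ∈ L → a ≤ L.foldr max 0 := by
  intro L
  induction L with
  | nil => intro a h; simp at h
  | cons b t ih =>
    intro a h
    rcases List.mem_cons.mp h with rfl | h
    · simp only [List.foldr_cons]; exact le_max_left _ _
    · simp only [List.foldr_cons]; exact le_trans (ih h) (le_max_right _ _)

lemma foldr_max_mem : ∀ (L : List ℕ), L.foldr max 0 = 0 ∨ L.foldr max 0 ∈ L := by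
  intro L
  induction L with
  | nil => left; rfl
  | cons b t ih =>
    simp only [List.foldr_cons]
    rcases Nat.le_total (t.foldr max 0) b with h | h
    · right; rw [Nat.max_eq_left h]; exact List.mem_cons_self
    · rw [Nat.max_eq_right h]
      rcases ih with h0 | hm
      · left; exact h0
      · right; exact List.mem_cons_of_mem _ hm

lemma sorted_of_len_le_one : ∀ {l : List ℕ}, l.length ≤ 1 → List.Pairwise (· < ·) l
  | [], _ => List.Pairwise.nil
  | [_], _ => List.pairwise_singleton _ _
  | _ :: _ :: _, h => by simp at h

lemma not_sorted_of_desc {b : List ℕ} (h1 : 1 < b.length)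
    (hd : b.getD 1 0 < b.getD 0 0) : ¬ List.Pairwise (· < ·) b := by
  intro hs
  have h0 : 0 < b.length := by omega
  rw [List.getD_eq_getElem b 0 h1, List.getD_eq_getElem b 0 h0] at hd
  have := List.pairwise_iff_getElem.mp hs 0 1 h0 h1 (by omega)
  omega

/-- Membership in the `DV` list means being a descent top. -/
lemma mem_dvals {l : List ℕ} {a : ℕ} (h : a ∈ DV l) :
    ∃ i, i + 1 < l.length ∧ l.getD i 0 = a ∧ l.getD (i + 1) 0 < a := by
  rw [DV] at h
  obtain ⟨i, hi, rfl⟩ := List.mem_map.mp h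
  have h1 := List.mem_filter.mp hi
  have h2 := List.mem_range.mp h1.1
  have h3 : l.getD (i + 1) 0 < l.getD i 0 := by simpa using h1.2
  exact ⟨i, by omega, rfl, h3⟩

/-- A descent top belongs to `DV`. -/
lemma desc_mem_dvals {l : List ℕ} {i : ℕ} (hi : i + 1 < l.length)
    (hd : l.getD (i + 1) 0 < l.getD i 0) : l.getD i 0 ∈ DV l := by
  rw [DV]
  exact List.mem_map.mpr ⟨i, List.mem_filter.mpr
    ⟨List.mem_range.mpr (by omega), by simpa using hd⟩, rfl⟩

lemma rixFact_struct : ∀ (N : ℕ) (l : List ℕ), l.length ≤ N → l.Nodup →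
    (rixFact l).2 <:+ l ∧ (l ≠ [] → (rixFact l).2 ≠ []) ∧
    (List.Pairwise (· < ·) (rixFact l).2 ∨ Bad (rixFact l).2) := by
  intro N
  induction N with
  | zero =>
    intro l hl _
    have hnil : l = [] := List.length_eq_zero_iff.mp (Nat.le_zero.mp hl)
    subst hnil
    rw [rixFact_snd_base1 (by simp)]
    exact ⟨List.suffix_refl _, fun h => h, Or.inl List.Pairwise.nil⟩
  | succ N ih =>
    intro l hl hnd
    by_cases h2 : l.length < 2
    · rw [rixFact_snd_base1 h2]
      exact ⟨List.suffix_refl _, fun h => h, Or.inl (sorted_of_len_le_one (by omega))⟩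
    by_cases hdnil : DV l = []
    · rw [rixFact_snd_base2 h2 hdnil]
      refine ⟨List.suffix_refl _, fun h => h, Or.inl ?_⟩
      rw [← List.isChain_iff_pairwise, List.isChain_iff_getElem]
      intro i hi
      have hi1 : i + 1 < l.length := by omega
      have hi0 : i < l.length := by omega
      have hnotdesc : ¬ (l.getD (i + 1) 0 < l.getD i 0) := by
        intro hd
        have := desc_mem_dvals hi1 hd
        rw [hdnil] at this
        simp at this
      rw [List.getD_eq_getElem l 0 hi1, List.getD_eq_getElem l 0 hi0] at hnotdesc
      have hne : l[i] ≠ l[i + 1] := by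
        intro h
        have := (List.Nodup.getElem_inj_iff hnd).mp h
        omega
      omega
    · -- DV l ≠ []
      have hxpos : ∀ a ∈ DV l, 0 < a := by
        intro a ha
        obtain ⟨i, _, _, hlt⟩ := mem_dvals ha
        omega
      have hxmem : XV l ∈ DV l := by
        rcases foldr_max_mem (DV l) with h0 | hm
        · exfalso
          obtain ⟨a, ha⟩ := List.exists_mem_of_ne_nil (DV l) hdnil
          have h1 := mem_le_foldr_max ha
          have h2 := hxpos a ha
          have h0' : (DV l).foldr max 0 = 0 := h0
          omega
        · exact hm
      obtain ⟨i, hi1, hix, hidesc⟩ := mem_dvals hxmem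
      have hi0 : i < l.length := by omega
      have hxmeml : XV l ∈ l := by
        rw [← hix, List.getD_eq_getElem l 0 hi0]
        exact List.getElem_mem hi0
      have hplt : l.idxOf (XV l) < l.length := List.idxOf_lt_length_iff.mpr hxmeml
      have hlp : l[l.idxOf (XV l)] = XV l := List.getElem_idxOf hplt
      have hpi : l.idxOf (XV l) = i := by
        have heq : l[l.idxOf (XV l)]'hplt = l[i]'hi0 := by
          rw [hlp, ← hix, List.getD_eq_getElem l 0 hi0]
        exact (List.Nodup.getElem_inj_iff hnd).mp heq
      by_cases hp0 : l.idxOf (XV l) = 0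
      · rw [rixFact_snd_base3 h2 hdnil hp0]
        refine ⟨List.suffix_refl _, fun h => h, Or.inr ?_⟩
        have hi00 : i = 0 := by omega
        subst hi00
        refine ⟨by omega, by rw [hix]; exact hix ▸ hidesc, ?_⟩
        intro j hj hjd
        have hmem := desc_mem_dvals hj hjd
        have hle := mem_le_foldr_max hmem
        rw [hix]
        exact hle
      · rw [rixFact_snd_rec h2 hdnil hp0]
        have hdl : (l.drop (l.idxOf (XV l) + 1)).length ≤ N := by
          rw [List.length_drop]; omega
        have hdnd : (l.drop (l.idxOf (XV l) + 1)).Nodup :=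
          (List.drop_suffix _ _).sublist.nodup hnd
        obtain ⟨ha, hb, hc⟩ := ih _ hdl hdnd
        refine ⟨ha.trans (List.drop_suffix _ _), fun _ => hb ?_, hc⟩
        intro hh
        have hz : (l.drop (l.idxOf (XV l) + 1)).length = 0 := by rw [hh]; rfl
        rw [List.length_drop] at hz
        omega

/-- If `y` is a letter of `β` larger than `β₁`, the suffix of `l` starting at `y`
is increasing. -/
lemma rix_of_big {l b : List ℕ} (hnd : l.Nodup) (hsuf : b <:+ l) (hbad : Bad b)
    {y : ℕ} (hy : y ∈ b) (hgt : b.getD 0 0 < y) :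
    ∃ t, t <:+ l ∧ List.Pairwise (· < ·) t ∧ y ∈ t := by
  obtain ⟨hlen, hdesc, hbound⟩ := hbad
  have hbnd : b.Nodup := hsuf.sublist.nodup hnd
  obtain ⟨j, hj, hjy⟩ := List.mem_iff_getElem.mp hy
  have h00 : (0 : ℕ) < b.length := by omega
  rw [List.getD_eq_getElem b 0 h00] at hgt
  -- no descent can start at an entry ≥ y
  have step : ∀ k (hk1 : k + 1 < b.length), y ≤ b[k] → b[k] < b[k + 1] := by
    intro k hk1 hyk
    have hk : k < b.length := by omega
    by_contra hge
    push_neg at hge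
    have hne : b[k + 1] ≠ b[k] := fun h => by
      have := (List.Nodup.getElem_inj_iff hbnd).mp h; omega
    have hlt : b[k + 1] < b[k] := lt_of_le_of_ne hge hne
    have hb := hbound k hk1 (by
      rw [List.getD_eq_getElem b 0 hk1, List.getD_eq_getElem b 0 hk]; exact hlt)
    rw [List.getD_eq_getElem b 0 hk, List.getD_eq_getElem b 0 h00] at hb
    omega
  -- all entries from position j on are ≥ y
  have key : ∀ k, j ≤ k → ∀ hk : k < b.length, y ≤ b[k] := by
    intro k hjk
    induction k, hjk using Nat.le_induction with
    | base => intro hk; exact le_of_eq hjy.symm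
    | succ m hjm ihm =>
      intro hk
      have hm : m < b.length := by omega
      have hym := ihm hm
      have := step m hk hym
      omega
  refine ⟨b.drop j, (List.drop_suffix _ _).trans hsuf, ?_, ?_⟩
  · rw [← List.isChain_iff_pairwise, List.isChain_iff_getElem]
    intro i hi
    simp only [List.get_eq_getElem, List.getElem_drop]
    have hlen' : (b.drop j).length = b.length - j := List.length_drop
    have h1 : j + i + 1 < b.length := by omega
    have h0 : j + i < b.length := by omega
    have hjy' := key (j + i) (by omega) h0
    have := step (j + i) h1 hjy'
    simpa [Nat.add_assoc] using this
  · rw [List.mem_iff_getElem]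
    refine ⟨0, ?_, ?_⟩
    · rw [List.length_drop]; omega
    · rw [List.getElem_drop]; simpa using hjy

/-- For `π` a permutation of [n] (n ≥ 1) with rix-factor `β`, the following are
equivalent: (a) `β` is increasing; (b) every letter of `β` is a rixed point;
(c) every letter of `β` is a rixed point or equals `β₁(π)`; (d) `β₁(π)` is a rixed
point. Moreover, any letter of `β` that is neither `β₁(π)` nor a rixed point is
smaller than `β₁(π)`. -/
theorem stmt_16 (n : ℕ) (hn : 1 ≤ n) (l : List ℕ) (hl : l.Perm (List.range' 1 n)) :
    (List.Pairwise (· < ·) (rixFact l).2 ↔ ∀ y ∈ (rixFact l).2, RixPt l y) ∧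
    ((∀ y ∈ (rixFact l).2, RixPt l y) ↔ ∀ y ∈ (rixFact l).2, RixPt l y ∨ y = beta1 l) ∧
    ((∀ y ∈ (rixFact l).2, RixPt l y ∨ y = beta1 l) ↔ RixPt l (beta1 l)) ∧
    (∀ y ∈ (rixFact l).2, y ≠ beta1 l → ¬RixPt l y → y < beta1 l) := by
  have hnd : l.Nodup := hl.nodup_iff.mpr (List.nodup_range' (s := 1) (n := n) 1 (by norm_num))
  have hlen : l.length = n := by rw [hl.length_eq, List.length_range']
  have hne : l ≠ [] := by
    intro h; rw [h] at hlen; simp at hlen; omega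
  obtain ⟨hsuf, hne2, hcase⟩ := rixFact_struct l.length l le_rfl hnd
  have hβne : (rixFact l).2 ≠ [] := hne2 hne
  set β := (rixFact l).2 with hβ
  obtain ⟨b, t, hbt⟩ : ∃ b t, β = b :: t := by
    cases hb : β with
    | nil => exact absurd hb hβne
    | cons b t => exact ⟨b, t, rfl⟩
  have hb1 : beta1 l = b := by
    rw [beta1, ← hβ, hbt]; rfl
  rcases hcase with hs | hbad
  · -- sorted case: everything holds
    have hrix : ∀ y ∈ β, RixPt l y := by
      intro y hy
      refine ⟨⟨β, hsuf, hs, hy⟩, ?_⟩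
      rw [hb1]
      rw [hbt] at hy
      rcases List.mem_cons.mp hy with rfl | hy'
      · exact le_rfl
      · exact le_of_lt (List.rel_of_pairwise_cons (hbt ▸ hs) hy')
    have hd : RixPt l (beta1 l) := by
      rw [hb1]; exact hrix b (hbt ▸ List.mem_cons_self)
    exact ⟨⟨fun _ => hrix, fun _ => hs⟩,
      ⟨fun h y hy => Or.inl (hrix y hy), fun _ => hrix⟩,
      ⟨fun _ => hd, fun _ y hy => Or.inl (hrix y hy)⟩,
      fun y hy _ hnr => absurd (hrix y hy) hnr⟩
  · -- bad case: everything fails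
    obtain ⟨hlen2, hdesc, hbound⟩ := hbad
    have h0 : (0 : ℕ) < β.length := by omega
    have hb0 : β.getD 0 0 = b := by rw [hbt]; rfl
    have hnsort : ¬ List.Pairwise (· < ·) β := not_sorted_of_desc hlen2 hdesc
    set w := β.getD 1 0 with hwdef
    have hwmem : w ∈ β := by
      rw [hwdef, List.getD_eq_getElem β 0 hlen2]
      exact List.getElem_mem hlen2
    have hwlt : w < b := by rw [← hb0]; exact hdesc
    have hnrw : ¬ RixPt l w := by
      rintro ⟨-, hle⟩
      rw [hb1] at hle
      omega
    have hnotb : ¬ RixPt l b := by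
      rintro ⟨⟨u, hul, hus, hbu⟩, -⟩
      rcases List.suffix_or_suffix_of_suffix hul hsuf with hub | hbu2
      · rw [hbt] at hub
        rcases List.suffix_cons_iff.mp hub with rfl | hut
        · exact hnsort (hbt ▸ hus)
        · have hbmt : b ∈ t := hut.sublist.mem hbu
          have hndβ : β.Nodup := hsuf.sublist.nodup hnd
          rw [hbt, List.nodup_cons] at hndβ
          exact hndβ.1 hbmt
      · exact hnsort (List.Pairwise.sublist hbu2.sublist hus)
    have hnd' : ¬ RixPt l (beta1 l) := by rw [hb1]; exact hnotb
    have hmor : ∀ y ∈ β, y ≠ beta1 l → ¬RixPt l y → y < beta1 l := by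
      intro y hy hney hnr
      rw [hb1] at hney ⊢
      by_contra hge
      push_neg at hge
      have hblt : b < y := lt_of_le_of_ne hge (Ne.symm hney)
      obtain ⟨u, h1, h2, h3⟩ := rix_of_big hnd hsuf ⟨hlen2, hdesc, hbound⟩ hy
        (by rw [hb0]; exact hblt)
      exact hnr ⟨⟨u, h1, h2, h3⟩, by rw [hb1]; omega⟩
    have hnb : ¬ ∀ y ∈ β, RixPt l y := fun h => hnrw (h w hwmem)
    have hnc : ¬ ∀ y ∈ β, RixPt l y ∨ y = beta1 l := by
      intro h
      rcases h w hwmem with h' | h'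
      · exact hnrw h'
      · rw [hb1] at h'; omega
    exact ⟨iff_of_false hnsort hnb, iff_of_false hnb hnc, iff_of_false hnc hnd',
      hmor⟩

end DMTCS
end

section
/- If x ∈ Rix(π) (x is a rixed point of π), then x = β_1(φ_x(π)); that is, after letting a rixed point x hop via valley-hopping, x becomes the first letter of the β rix-factor of the resulting permutation. -/
namespace DMTCS

def entry (l : List ℕ) (i : ℕ) : WithTop ℕ :=
  if h : 1 ≤ i ∧ i ≤ l.length then ((l.get ⟨i - 1, by omega⟩ : ℕ) : WithTop ℕ) else ⊤

/-- The valley-hopping involution `φ_x`: writing `l = w1 w2 x w4 w5` where `w2` (resp. `w4`)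
is the maximal consecutive subword immediately left (resp. right) of `x` with all letters
smaller than `x`, it sends `l` to `w1 w4 x w2 w5` when `x` is a double ascent or double
descent (equivalently, exactly one of `w2`, `w4` is nonempty), and fixes `l` otherwise. -/
def hop (x : ℕ) (l : List ℕ) : List ℕ :=
  if x ∈ l then
    let l1 := l.takeWhile (fun a => decide (a ≠ x))
    let l2 := (l.dropWhile (fun a => decide (a ≠ x))).tail
    let w2 := (l1.reverse.takeWhile (fun a => decide (a < x))).reverse
    let w1 := (l1.reverse.dropWhile (fun a => decide (a < x))).reverse
    let w4 := l2.takeWhile (fun a => decide (a < x))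
    let w5 := l2.dropWhile (fun a => decide (a < x))
    if (w2 = [] ∧ w4 ≠ []) ∨ (w2 ≠ [] ∧ w4 = []) then
      w1 ++ w4 ++ x :: w2 ++ w5
    else l
  else l

def dtops (l : List ℕ) : List ℕ :=
  ((List.range (l.length - 1)).filter
    (fun i => decide (l.getD (i + 1) 0 < l.getD i 0))).map (fun i => l.getD i 0)

def mdv (l : List ℕ) : ℕ := (dtops l).foldr max 0

lemma dtops_def (l : List ℕ) :
    ((List.range (l.length - 1)).filter
      (fun i => decide (l.getD (i + 1) 0 < l.getD i 0))).map (fun i => l.getD i 0) = dtops l := rfl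

lemma mdv_def (l : List ℕ) : (dtops l).foldr max 0 = mdv l := rfl

lemma rixFact_snd (l : List ℕ) :
    (rixFact l).2 =
      if l.length < 2 ∨ dtops l = [] ∨ l.idxOf (mdv l) = 0 then l
      else (rixFact (l.drop (l.idxOf (mdv l) + 1))).2 := by
  rw [rixFact]
  by_cases h1 : l.length < 2
  · rw [dif_pos h1, if_pos (Or.inl h1)]
  · rw [dif_neg h1]
    dsimp only
    rw [dtops_def, mdv_def]
    by_cases h2 : dtops l = []
    · rw [if_pos h2, if_pos (Or.inr (Or.inl h2))]
    · rw [if_neg h2]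
      by_cases h3 : l.idxOf (mdv l) = 0
      · rw [if_pos h3, if_pos (Or.inr (Or.inr h3))]
      · rw [if_neg h3, if_neg (by push_neg; exact ⟨by omega, h2, h3⟩)]


lemma mem_dtops {l : List ℕ} {a : ℕ} :
    a ∈ dtops l ↔ ∃ i, i + 1 < l.length ∧ l.getD (i + 1) 0 < l.getD i 0 ∧ l.getD i 0 = a := by
  simp only [dtops, List.mem_map, List.mem_filter, List.mem_range, decide_eq_true_eq]
  constructor
  · rintro ⟨i, ⟨hi, hd⟩, rfl⟩; exact ⟨i, by omega, hd, rfl⟩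
  · rintro ⟨i, hi, hd, rfl⟩; exact ⟨i, ⟨by omega, hd⟩, rfl⟩

lemma le_foldr_max {a : ℕ} {l : List ℕ} (h : a ∈ l) : a ≤ l.foldr max 0 := by
  induction l with
  | nil => simp at h
  | cons b t ih =>
    rcases List.mem_cons.1 h with rfl | h
    · exact le_max_left _ _
    · exact le_trans (ih h) (le_max_right _ _)

lemma foldr_max_le {l : List ℕ} {c : ℕ} (h : ∀ a ∈ l, a ≤ c) : l.foldr max 0 ≤ c := by
  induction l with
  | nil => simp
  | cons b t ih =>
    simp only [List.foldr_cons, max_le_iff]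
    exact ⟨h b (by simp), ih fun a ha => h a (by simp [ha])⟩

lemma foldr_max_mem_s17 {l : List ℕ} (h : l.foldr max 0 ≠ 0) : l.foldr max 0 ∈ l := by
  induction l with
  | nil => simp at h
  | cons b t ih =>
    simp only [List.foldr_cons] at *
    rcases max_cases b (t.foldr max 0) with ⟨he, _⟩ | ⟨he, _⟩
    · rw [he]; exact List.mem_cons_self
    · rw [he] at h ⊢; exact List.mem_cons_of_mem _ (ih h)

lemma headD_eq_getD (l : List ℕ) (d : ℕ) : l.headD d = l.getD 0 d := by
  cases l <;> simp

lemma sorted_getD {w : List ℕ} (hs : List.Pairwise (· < ·) w) {j : ℕ} (h : j + 1 < w.length) :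
    w.getD j 0 < w.getD (j + 1) 0 := by
  rw [List.getD_eq_getElem w 0 (by omega), List.getD_eq_getElem w 0 h]
  exact List.pairwise_iff_getElem.1 hs j (j + 1) (by omega) h (by omega)

/-- `v` is tame for `x`: nonempty, starts `≤ x`, all descent tops `≤ x`. -/
def Tame (x : ℕ) (v : List ℕ) : Prop :=
  v ≠ [] ∧ v.getD 0 0 ≤ x ∧
    ∀ i, i + 1 < v.length → v.getD (i + 1) 0 < v.getD i 0 → v.getD i 0 ≤ x

lemma bigtop_iff {x : ℕ} {u v : List ℕ} (hv : Tame x v) {d : ℕ} (hd : x < d) :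
    d ∈ dtops (u ++ v) ↔
      ∃ i, i < u.length ∧ u.getD i 0 = d ∧ (i + 1 < u.length → u.getD (i + 1) 0 < d) := by
  obtain ⟨hv0, hvh, hvt⟩ := hv
  have hvl : 1 ≤ v.length := List.length_pos_iff.2 hv0
  rw [mem_dtops]
  constructor
  · rintro ⟨i, hi, hlt, he⟩
    rw [List.length_append] at hi
    by_cases hiu : i < u.length
    · refine ⟨i, hiu, ?_, ?_⟩
      · rw [← he, List.getD_append _ _ _ _ hiu]
      · intro hi1
        rw [List.getD_append u v 0 (i+1) hi1, List.getD_append u v 0 i hiu] at hlt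
        rw [List.getD_append u v 0 i hiu] at he
        omega
    · exfalso
      push_neg at hiu
      rw [List.getD_append_right _ _ _ _ hiu] at he
      rw [List.getD_append_right _ _ _ _ (by omega : u.length ≤ i + 1)] at hlt
      rw [List.getD_append_right _ _ _ _ hiu] at hlt
      have : i + 1 - u.length = (i - u.length) + 1 := by omega
      rw [this] at hlt
      have := hvt (i - u.length) (by omega) hlt
      omega
  · rintro ⟨i, hiu, he, hnext⟩
    refine ⟨i, ?_, ?_, ?_⟩
    · rw [List.length_append]; omega
    · by_cases hi1 : i + 1 < u.length
      · rw [List.getD_append _ _ _ _ hi1, List.getD_append _ _ _ _ hiu, he]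
        exact hnext hi1
      · have hie : i + 1 = u.length := by omega
        rw [List.getD_append_right _ _ _ _ (by omega), List.getD_append _ _ _ _ hiu, he]
        have : i + 1 - u.length = 0 := by omega
        rw [this]
        omega
    · rw [List.getD_append _ _ _ _ hiu, he]

lemma getLast_mem_dtops {x : ℕ} {u v : List ℕ} (hv : Tame x v) (hu : u ≠ [])
    (hlast : ∀ y, u.getLast? = some y → x < y) :
    u.getLast hu ∈ dtops (u ++ v) ∧ x < u.getLast hu := by
  have hxy : x < u.getLast hu := hlast _ (List.getLast?_eq_getLast hu)
  have hul : 1 ≤ u.length := List.length_pos_iff.2 hu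
  refine ⟨(bigtop_iff hv hxy).2 ⟨u.length - 1, by omega, ?_, by omega⟩, hxy⟩
  rw [List.getD_eq_getElem u 0 (by omega), List.getLast_eq_getElem]

lemma mdv_facts {x : ℕ} {u v : List ℕ} (hv : Tame x v) (hu : u ≠ [])
    (hlast : ∀ y, u.getLast? = some y → x < y) :
    x < mdv (u ++ v) ∧ mdv (u ++ v) ∈ dtops (u ++ v) := by
  obtain ⟨hmem, hxy⟩ := getLast_mem_dtops hv hu hlast
  have h1 : x < mdv (u ++ v) := lt_of_lt_of_le hxy (le_foldr_max hmem)
  have h2 : mdv (u ++ v) ≠ 0 := by omega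
  exact ⟨h1, foldr_max_mem_s17 h2⟩

lemma mdv_eq {x : ℕ} {u v v' : List ℕ} (hv : Tame x v) (hv' : Tame x v') (hu : u ≠ [])
    (hlast : ∀ y, u.getLast? = some y → x < y) :
    mdv (u ++ v) = mdv (u ++ v') := by
  have key : ∀ w w' : List ℕ, Tame x w → Tame x w' →
      mdv (u ++ w) ≤ mdv (u ++ w') := by
    intro w w' hw hw'
    obtain ⟨h1, h2⟩ := mdv_facts hw hu hlast
    exact le_foldr_max ((bigtop_iff hw' h1).2 ((bigtop_iff hw h1).1 h2))
  exact le_antisymm (key v v' hv hv') (key v' v hv' hv)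

lemma indexOf_eq_of_getD {A : List ℕ} (hnd : A.Nodup) {i : ℕ} (hi : i < A.length) {d : ℕ}
    (he : A.getD i 0 = d) : A.idxOf d = i := by
  rw [List.getD_eq_getElem A 0 hi] at he
  have := List.get_idxOf hnd ⟨i, hi⟩
  simp only [List.get_eq_getElem] at this
  rw [he] at this
  exact this


lemma key (x : ℕ) (v v' : List ℕ) (hv : Tame x v) (hv' : Tame x v')
    (hperm : v.Perm v') (hbase : beta1 v' = x) (u : List ℕ)
    (hnd : (u ++ v).Nodup) (hlast : ∀ y, u.getLast? = some y → x < y)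
    (hb : beta1 (u ++ v) ≤ x) : beta1 (u ++ v') = x := by
  rcases eq_or_ne u [] with rfl | hu
  · simpa using hbase
  · have hnd' : (u ++ v').Nodup := ((hperm.append_left u).nodup_iff).1 hnd
    obtain ⟨hlt, hmem⟩ := mdv_facts hv hu hlast
    have hmeq : mdv (u ++ v) = mdv (u ++ v') := mdv_eq hv hv' hu hlast
    obtain ⟨i, hiu, hieq, -⟩ := (bigtop_iff hv hlt).1 hmem
    have hul : 1 ≤ u.length := List.length_pos_iff.2 hu
    have hvl : 1 ≤ v.length := List.length_pos_iff.2 hv.1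
    have hv'l : 1 ≤ v'.length := List.length_pos_iff.2 hv'.1
    have hidx : (u ++ v).idxOf (mdv (u ++ v)) = i := by
      apply indexOf_eq_of_getD hnd (by rw [List.length_append]; omega)
      rw [List.getD_append _ _ _ _ hiu]; exact hieq
    have hidx' : (u ++ v').idxOf (mdv (u ++ v')) = i := by
      apply indexOf_eq_of_getD hnd' (by rw [List.length_append]; omega)
      rw [← hmeq, List.getD_append _ _ _ _ hiu]; exact hieq
    have hdne : dtops (u ++ v) ≠ [] := List.ne_nil_of_mem hmem
    have hmem' : mdv (u ++ v') ∈ dtops (u ++ v') := by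
      rw [← hmeq]
      exact (bigtop_iff hv' hlt).2 ((bigtop_iff hv hlt).1 hmem)
    have hdne' : dtops (u ++ v') ≠ [] := List.ne_nil_of_mem hmem'
    rcases Nat.eq_zero_or_pos i with rfl | hip
    · exfalso
      have hbeq : beta1 (u ++ v) = mdv (u ++ v) := by
        unfold beta1
        rw [rixFact_snd, if_pos (Or.inr (Or.inr hidx)), headD_eq_getD,
          List.getD_append u v 0 0 (by omega)]
        exact hieq
      omega
    · have e1 : beta1 (u ++ v) = beta1 (u.drop (i + 1) ++ v) := by
        unfold beta1
        rw [rixFact_snd, if_neg (by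
          push_neg
          exact ⟨by rw [List.length_append]; omega, hdne, by rw [hidx]; omega⟩)]
        rw [hidx, List.drop_append_of_le_length (by omega : i + 1 ≤ u.length)]
      have e1' : beta1 (u ++ v') = beta1 (u.drop (i + 1) ++ v') := by
        unfold beta1
        rw [rixFact_snd, if_neg (by
          push_neg
          exact ⟨by rw [List.length_append]; omega, hdne', by rw [hidx']; omega⟩)]
        rw [hidx', List.drop_append_of_le_length (by omega : i + 1 ≤ u.length)]
      rw [e1']
      have hsuf : u.drop (i + 1) ++ v <:+ u ++ v :=
        ⟨u.take (i + 1), by rw [← List.append_assoc, List.take_append_drop]⟩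
      refine key x v v' hv hv' hperm hbase (u.drop (i + 1)) (hsuf.sublist.nodup hnd) ?_ (e1 ▸ hb)
      intro y hy
      apply hlast
      rw [← List.take_append_drop (i + 1) u, List.getLast?_append, hy]
      rfl
termination_by u.length
decreasing_by simp only [List.length_drop]; omega


lemma getD_lt_of_forall {w2 : List ℕ} {x : ℕ} (h2 : ∀ a ∈ w2, a < x) {j : ℕ}
    (h : j < w2.length) : w2.getD j 0 < x := by
  rw [List.getD_eq_getElem w2 0 h]; exact h2 _ (List.getElem_mem h)

lemma tame_v {x : ℕ} {w2 w5 : List ℕ} (h2 : ∀ a ∈ w2, a < x)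
    (h5s : List.Pairwise (· < ·) w5) : Tame x (w2 ++ x :: w5) := by
  refine ⟨by simp, ?_, ?_⟩
  · rcases eq_or_ne w2 [] with rfl | hne
    · simp
    · have hm : 0 < w2.length := List.length_pos_iff.2 hne
      rw [List.getD_append _ _ _ _ hm]
      exact le_of_lt (getD_lt_of_forall h2 hm)
  · intro i hi hd
    rw [List.length_append, List.length_cons] at hi
    by_cases hlt2 : i < w2.length
    · rw [List.getD_append _ _ _ _ hlt2]
      exact le_of_lt (getD_lt_of_forall h2 hlt2)
    · push_neg at hlt2
      by_cases heq : i = w2.length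
      · subst heq
        rw [List.getD_append_right _ _ _ _ le_rfl, Nat.sub_self, List.getD_cons_zero]
      · obtain ⟨j, hj⟩ : ∃ j, i - w2.length = j + 1 := ⟨i - w2.length - 1, by omega⟩
        exfalso
        rw [List.getD_append_right _ _ _ _ (by omega : w2.length ≤ i + 1),
            List.getD_append_right _ _ _ _ hlt2, hj,
            (by omega : i + 1 - w2.length = j + 1 + 1), List.getD_cons_succ,
            List.getD_cons_succ] at hd
        exact absurd hd (not_lt.2 (le_of_lt (sorted_getD h5s (by omega))))

lemma tame_v' {x : ℕ} {w2 w5 : List ℕ} (h2 : ∀ a ∈ w2, a < x)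
    (h5s : List.Pairwise (· < ·) w5) : Tame x (x :: (w2 ++ w5)) := by
  refine ⟨by simp, by simp, ?_⟩
  intro i hi hd
  rw [List.length_cons, List.length_append] at hi
  rcases i with _ | j
  · rw [List.getD_cons_zero]
  · simp only [List.getD_cons_succ] at hd ⊢
    by_cases hj : j < w2.length
    · rw [List.getD_append _ _ _ _ hj]
      exact le_of_lt (getD_lt_of_forall h2 hj)
    · push_neg at hj
      exfalso
      rw [List.getD_append_right _ _ _ _ hj,
          List.getD_append_right _ _ _ _ (by omega : w2.length ≤ j + 1),
          (by omega : j + 1 - w2.length = (j - w2.length) + 1)] at hd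
      exact absurd hd (not_lt.2 (le_of_lt (sorted_getD h5s (by omega))))

lemma beta1_v' {x : ℕ} {w2 w5 : List ℕ} (h2 : ∀ a ∈ w2, a < x)
    (h5 : ∀ a ∈ w5, x < a) (h5s : List.Pairwise (· < ·) w5) :
    beta1 (x :: (w2 ++ w5)) = x := by
  rcases eq_or_ne w2 [] with rfl | hne
  · have hs : List.Pairwise (· < ·) (x :: ([] ++ w5)) := by
      simp only [List.nil_append]; exact List.pairwise_cons.2 ⟨h5, h5s⟩
    have hd : dtops (x :: ([] ++ w5)) = [] := by
      rw [List.eq_nil_iff_forall_not_mem]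
      intro a ha
      obtain ⟨i, hi, hlt, -⟩ := mem_dtops.1 ha
      exact absurd hlt (not_lt.2 (le_of_lt (sorted_getD hs hi)))
    unfold beta1
    rw [rixFact_snd, if_pos (Or.inr (Or.inl hd)), headD_eq_getD, List.getD_cons_zero]
  · have htame := tame_v' h2 h5s
    have hm : 0 < w2.length := List.length_pos_iff.2 hne
    have hxmem : x ∈ dtops (x :: (w2 ++ w5)) := by
      refine mem_dtops.2 ⟨0, ?_, ?_, ?_⟩
      · simp only [List.length_cons, List.length_append]; omega
      · rw [List.getD_cons_zero, List.getD_cons_succ, List.getD_append _ _ _ _ hm]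
        exact getD_lt_of_forall h2 hm
      · rw [List.getD_cons_zero]
    have hle : ∀ a ∈ dtops (x :: (w2 ++ w5)), a ≤ x := by
      intro a ha
      obtain ⟨i, hi, hlt, he⟩ := mem_dtops.1 ha
      exact he ▸ htame.2.2 i hi hlt
    have hmdv : mdv (x :: (w2 ++ w5)) = x :=
      le_antisymm (foldr_max_le hle) (le_foldr_max hxmem)
    have hidx : (x :: (w2 ++ w5)).idxOf (mdv (x :: (w2 ++ w5))) = 0 := by
      rw [hmdv]; exact List.idxOf_cons_self
    unfold beta1
    rw [rixFact_snd, if_pos (Or.inr (Or.inr hidx)), headD_eq_getD, List.getD_cons_zero]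


lemma takeWhile_append_all {p : ℕ → Bool} {a b : List ℕ} (h : ∀ c ∈ a, p c) :
    (a ++ b).takeWhile p = a ++ b.takeWhile p := by
  induction a with
  | nil => simp
  | cons hd tl ih =>
    rw [List.cons_append, List.takeWhile_cons, if_pos (h hd (by simp)), List.cons_append,
      ih fun c hc => h c (by simp [hc])]

lemma dropWhile_append_all {p : ℕ → Bool} {a b : List ℕ} (h : ∀ c ∈ a, p c) :
    (a ++ b).dropWhile p = b.dropWhile p := by
  induction a with
  | nil => simp
  | cons hd tl ih =>
    rw [List.cons_append, List.dropWhile_cons, if_pos (h hd (by simp))]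
    exact ih fun c hc => h c (by simp [hc])

lemma takeWhile_head_false {p : ℕ → Bool} {b : List ℕ} (h : ∀ c, b.head? = some c → p c = false) :
    b.takeWhile p = [] := by
  cases b with
  | nil => rfl
  | cons hd tl => rw [List.takeWhile_cons, if_neg (by simp [h hd rfl])]

lemma dropWhile_head_false {p : ℕ → Bool} {b : List ℕ} (h : ∀ c, b.head? = some c → p c = false) :
    b.dropWhile p = b := by
  cases b with
  | nil => rfl
  | cons hd tl => rw [List.dropWhile_cons, if_neg (by simp [h hd rfl])]

lemma hop_eq {x : ℕ} {u w2 w5 : List ℕ} (hxu : x ∉ u ++ w2)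
    (h2 : ∀ a ∈ w2, a < x) (h5 : ∀ a ∈ w5, x < a)
    (hu : ∀ y, u.getLast? = some y → x < y) :
    hop x (u ++ w2 ++ x :: w5) = u ++ x :: (w2 ++ w5) := by
  have hpne : ∀ c ∈ u ++ w2, (fun a => decide (a ≠ x)) c = true := by
    intro c hc
    simp only [decide_eq_true_eq]
    intro h; exact hxu (h ▸ hc)
  have hmem : x ∈ u ++ w2 ++ x :: w5 := by simp
  have e1 : (u ++ w2 ++ x :: w5).takeWhile (fun a => decide (a ≠ x)) = u ++ w2 := by
    rw [takeWhile_append_all hpne, List.takeWhile_cons, if_neg (by simp), List.append_nil]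
  have e2 : (u ++ w2 ++ x :: w5).dropWhile (fun a => decide (a ≠ x)) = x :: w5 := by
    rw [dropWhile_append_all hpne, List.dropWhile_cons, if_neg (by simp)]
  have eurev : u.reverse.takeWhile (fun a => decide (a < x)) = [] := by
    apply takeWhile_head_false
    intro c hc
    rw [List.head?_reverse] at hc
    have := hu c hc
    simp; omega
  have eurevd : u.reverse.dropWhile (fun a => decide (a < x)) = u.reverse := by
    apply dropWhile_head_false
    intro c hc
    rw [List.head?_reverse] at hc
    have := hu c hc
    simp; omega
  have e3 : ((u ++ w2).reverse.takeWhile (fun a => decide (a < x))).reverse = w2 := by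
    rw [List.reverse_append, takeWhile_append_all (by
      intro c hc
      simp only [decide_eq_true_eq]
      exact h2 c (List.mem_reverse.1 hc)), eurev, List.append_nil, List.reverse_reverse]
  have e4 : ((u ++ w2).reverse.dropWhile (fun a => decide (a < x))).reverse = u := by
    rw [List.reverse_append, dropWhile_append_all (by
      intro c hc
      simp only [decide_eq_true_eq]
      exact h2 c (List.mem_reverse.1 hc)), eurevd, List.reverse_reverse]
  have e5 : w5.takeWhile (fun a => decide (a < x)) = [] := by
    apply takeWhile_head_false
    intro c hc
    have : c ∈ w5 := by cases w5; · simp at hc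
                        · simp at hc; simp [hc]
    have := h5 c this
    simp; omega
  have e6 : w5.dropWhile (fun a => decide (a < x)) = w5 := by
    apply dropWhile_head_false
    intro c hc
    have : c ∈ w5 := by cases w5; · simp at hc
                        · simp at hc; simp [hc]
    have := h5 c this
    simp; omega
  unfold hop
  rw [if_pos hmem]
  dsimp only
  rw [e1, e2, List.tail_cons, e3, e4, e5, e6]
  by_cases hw2 : w2 = []
  · subst hw2
    rw [if_neg (by simp)]
    simp
  · rw [if_pos (Or.inr ⟨hw2, rfl⟩)]
    simp


/-- If `x` is a rixed point of `π`, then `x = β₁(φ_x(π))`: after letting `x` hop,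
it becomes the first letter of the `β` rix-factor of the resulting permutation. -/
theorem stmt_17 (n : ℕ) (l : List ℕ) (hl : l.Perm (List.range' 1 n))
    (x : ℕ) (hx : RixPt l x) :
    beta1 (hop x l) = x := by
  obtain ⟨⟨t, ⟨c, hct⟩, htsort, hxt⟩, hb⟩ := hx
  have hnd : l.Nodup := hl.nodup_iff.mpr (List.nodup_range' (s := 1) (n := n))
  obtain ⟨s, w5, hts⟩ := List.append_of_mem hxt
  have hl0 : l = (c ++ s) ++ x :: w5 := by
    rw [← hct, hts, List.append_assoc]
  set u0 := c ++ s with hu0def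
  have hsx : List.Pairwise (· < ·) (x :: w5) :=
    List.Pairwise.sublist (List.IsSuffix.sublist ⟨s, hts.symm⟩) htsort
  obtain ⟨h5all, h5s⟩ := List.pairwise_cons.1 hsx
  rw [hl0] at hnd
  have hdisj := (List.nodup_append.1 hnd).2.2
  have hxu0 : x ∉ u0 := fun h => hdisj x h x List.mem_cons_self rfl
  set w2 := (u0.reverse.takeWhile (fun a => decide (a < x))).reverse with hw2e
  set u := (u0.reverse.dropWhile (fun a => decide (a < x))).reverse with hue
  have huw2 : u ++ w2 = u0 := by
    rw [hue, hw2e, ← List.reverse_append, List.takeWhile_append_dropWhile, List.reverse_reverse]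
  have h2 : ∀ a ∈ w2, a < x := by
    intro a ha
    rw [hw2e, List.mem_reverse] at ha
    have := List.mem_takeWhile_imp ha
    simpa using this
  have hulast : ∀ y, u.getLast? = some y → x < y := by
    intro y hy
    rw [hue, List.getLast?_reverse] at hy
    cases hdw : u0.reverse.dropWhile (fun a => decide (a < x)) with
    | nil => rw [hdw] at hy; simp at hy
    | cons hd tl =>
      rw [hdw] at hy
      simp only [List.head?_cons, Option.some.injEq] at hy
      subst hy
      have hne : u0.reverse.dropWhile (fun a => decide (a < x)) ≠ [] := by
        rw [hdw]; simp
      have h1 : (u0.reverse.dropWhile (fun a => decide (a < x))).head? = some hd := by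
        rw [hdw]; rfl
      have h2' := List.head?_eq_head hne
      rw [h1] at h2'
      have hpf := List.head_dropWhile_not (fun a => decide (a < x)) (l := u0.reverse) hne
      rw [← Option.some_inj.1 h2'] at hpf
      have hmemu0 : hd ∈ u0 := by
        apply List.mem_reverse.1
        exact List.Sublist.mem (by rw [hdw]; exact List.mem_cons_self)
          (List.dropWhile_sublist _)
      have hne2 : hd ≠ x := fun h => hxu0 (h ▸ hmemu0)
      simp only [decide_eq_false_iff_not] at hpf
      omega
  have hle : l = u ++ w2 ++ x :: w5 := by rw [hl0, huw2]
  have hxuw2 : x ∉ u ++ w2 := by rw [huw2]; exact hxu0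
  have hhop : hop x l = u ++ x :: (w2 ++ w5) := by
    rw [hle]; exact hop_eq hxuw2 h2 h5all hulast
  rw [hhop]
  have hndv : (u ++ (w2 ++ x :: w5)).Nodup := by
    rw [← List.append_assoc, huw2]; exact hnd
  exact key x (w2 ++ x :: w5) (x :: (w2 ++ w5)) (tame_v h2 h5s) (tame_v' h2 h5s)
    List.perm_middle (beta1_v' h2 h5all h5s) u hndv hulast
    (by rw [← List.append_assoc, huw2, ← hl0]; exact hb)

end DMTCS
end
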